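/- Assume the resolvent family (R(t))_{t≥0} of the Volterra equation has bounded variation in operator norm on compact intervals, and Z is an H-valued Lévy process. Then for every λ ∈ H and every t > 0, log E[exp(i⟨λ, ∫_{(0,t]} R(t−τ) dZ(τ)⟩_H)] = ∫_{(0,t]} log E[exp(i⟨R(t−s)* λ, Z(1)⟩_H)] ds, i.e. the logarithm of the characteristic functional of the law of the stochastic convolution at time t equals the time integral of the characteristic exponent of Z(1) evaluated at R(t−s)* λ. -/

import Mathlib

open MeasureTheory Filter Topology ProbabilityTheory

attribute [local instance] Classical.propDecidable

noncomputable section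

/-- `Z` is an `H`-valued Lévy process on `(Ω, P)`: `Z 0 = 0` a.s., càdlàg paths,
stationary independent increments, continuous in probability. -/
structure IsLevyProcess {Ω : Type*} [MeasurableSpace Ω] {H : Type*}
    [NormedAddCommGroup H] [InnerProductSpace ℝ H]
    [MeasurableSpace H] [BorelSpace H]
    (P : Measure Ω) (Z : ℝ → Ω → H) : Prop where
  measurable : ∀ t : ℝ, Measurable (Z t)
  init : ∀ᵐ ω ∂P, Z 0 ω = 0
  rightCont : ∀ ω, ∀ t : ℝ, 0 ≤ t → ContinuousWithinAt (fun s => Z s ω) (Set.Ici t) t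
  leftLim : ∀ ω, ∀ t : ℝ, 0 < t → ∃ l : H, Tendsto (fun s => Z s ω) (nhdsWithin t (Set.Iio t)) (nhds l)
  stationary : ∀ s t : ℝ, 0 ≤ s → 0 ≤ t →
    Measure.map (fun ω => Z (t + s) ω - Z t ω) P = Measure.map (Z s) P
  indep : ∀ (n : ℕ) (t : Fin (n + 1) → ℝ), 0 ≤ t 0 → Monotone t →
    iIndepFun
      (fun i : Fin n => fun ω => Z (t i.succ) ω - Z (t i.castSucc) ω) P
  contInProb : ∀ t : ℝ, 0 ≤ t → ∀ ε : ℝ, 0 < ε →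
    Tendsto (fun s => P {ω | ε < ‖Z s ω - Z t ω‖}) (nhdsWithin t (Set.Ici 0)) (nhds 0)

/-- A sequence of tagged partitions of `[a,b]` whose mesh tends to `0`. -/
structure PartitionSeq (a b : ℝ) where
  m : ℕ → ℕ
  pt : ℕ → ℕ → ℝ
  tag : ℕ → ℕ → ℝ
  left : ∀ n, pt n 0 = a
  right : ∀ n, pt n (m n) = b
  mono : ∀ n, ∀ k < m n, pt n k < pt n (k + 1)
  tag_mem : ∀ n, ∀ k < m n, tag n k ∈ Set.Icc (pt n k) (pt n (k + 1))
  mesh : ∀ ε > (0:ℝ), ∃ N, ∀ n ≥ N, ∀ k < m n, pt n (k + 1) - pt n k < ε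

/-- `Y` is the stochastic integral `∫_(a,b] F(s) dZ(s)`, i.e. the limit in probability of the
Riemann–Stieltjes sums `∑ₖ F(tagₖ)(Z(s_{k+1}) - Z(sₖ))` along every sequence of tagged
partitions of `[a,b]` with mesh tending to `0`. -/
def IsRSStochIntegral {Ω : Type*} [MeasurableSpace Ω] {H G : Type*}
    [NormedAddCommGroup H] [InnerProductSpace ℝ H]
    [NormedAddCommGroup G] [InnerProductSpace ℝ G]
    (P : Measure Ω) (F : ℝ → H →L[ℝ] G) (Z : ℝ → Ω → H) (a b : ℝ) (Y : Ω → G) : Prop :=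
  ∀ π : PartitionSeq a b,
    TendstoInMeasure P
      (fun n ω => ∑ k ∈ Finset.range (π.m n),
        F (π.tag n k) (Z (π.pt n (k + 1)) ω - Z (π.pt n k) ω))
      atTop Y

/-- `Y` is the stochastic convolution `∫₀ᵗ R(t-τ) dZ(τ)`. -/
def IsStochConvAt {Ω : Type*} [MeasurableSpace Ω] {H : Type*}
    [NormedAddCommGroup H] [InnerProductSpace ℝ H]
    (P : Measure Ω) (R : ℝ → H →L[ℝ] H) (Z : ℝ → Ω → H) (t : ℝ) (Y : Ω → H) : Prop :=
  IsRSStochIntegral P (fun s => R (t - s)) Z 0 t Y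

/-- The family `R` is a resolvent family for the Volterra equation
`u(t) = ∫₀ᵗ a(t-τ) A u(τ) dτ + x` associated with the kernel `a` and the (possibly unbounded)
densely defined operator `A`. -/
structure IsResolventFamily {H : Type*} [NormedAddCommGroup H] [InnerProductSpace ℝ H]
    (a : ℝ → ℝ) (A : H →ₗ.[ℝ] H) (R : ℝ → H →L[ℝ] H) : Prop where
  init : R 0 = ContinuousLinearMap.id ℝ H
  strong_cont : ∀ x ∈ A.domain, ContinuousOn (fun t => R t x) (Set.Ici 0)
  loc_bdd : ∀ T : ℝ, 0 < T → ∃ C : ℝ, ∀ t ∈ Set.Icc (0:ℝ) T, ‖R t‖ ≤ C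
  maps_domain : ∀ t : ℝ, 0 ≤ t → ∀ x ∈ A.domain, R t x ∈ A.domain
  resolvent_eq : ∀ t : ℝ, 0 ≤ t → ∀ x : A.domain,
    R t x = (x : H) + ∫ τ in Set.Ioc (0:ℝ) t,
      a (t - τ) • (if h : R τ (x : H) ∈ A.domain then A ⟨R τ (x : H), h⟩ else 0)

/-- A probability law `μ` on `G` is infinitely divisible: for every `n ≥ 1` it is the `n`-fold
convolution of some probability measure, i.e. the law of the sum of `n` i.i.d. copies. -/
def InfinitelyDivisible {G : Type*} [MeasurableSpace G] [AddCommMonoid G] (μ : Measure G) : Prop :=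
  ∀ n : ℕ, 0 < n → ∃ ν : Measure G, IsProbabilityMeasure ν ∧
    μ = Measure.map (fun x : Fin n → G => ∑ i, x i) (Measure.pi fun _ => ν)


/-- An operator-valued function `F` has bounded variation in operator norm on `[a,b]`. -/
def OpBoundedVariationOn {H : Type*} [NormedAddCommGroup H] [InnerProductSpace ℝ H]
    (F : ℝ → H →L[ℝ] H) (a b : ℝ) : Prop :=
  ∃ C : ℝ, ∀ (m : ℕ) (pt : ℕ → ℝ), pt 0 = a → pt m = b →
    (∀ k < m, pt k ≤ pt (k + 1)) →
    ∑ k ∈ Finset.range m, ‖F (pt (k + 1)) - F (pt k)‖ ≤ C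


open MeasureTheory Filter Topology Complex

-- sin m / m < 1 bound off a neighborhood of 0
lemma aux_sinc_lt_one {x : ℝ} (hx : x ≠ 0) : Real.sin x / x < 1 := by
  rcases lt_or_gt_of_ne hx with h | h
  · rw [show Real.sin x / x = Real.sin (-x) / (-x) by rw [Real.sin_neg]; ring]
    rw [div_lt_one (by linarith)]
    exact Real.sin_lt (by linarith)
  · rw [div_lt_one h]; exact Real.sin_lt h

lemma aux_sinc_bound : ∀ δ > (0:ℝ), ∃ ε > (0:ℝ), ε ≤ 1/2 ∧
    ∀ m : ℝ, δ ≤ |m| → (if m = 0 then (1:ℝ) else Real.sin m / m) ≤ 1 - ε := by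
  intro δ hδ
  set δ' := min δ 1 with hδ'def
  have hδ'pos : 0 < δ' := lt_min hδ one_pos
  have hδ'le : δ' ≤ 1 := min_le_right _ _
  set K : Set ℝ := Set.Icc (-2:ℝ) 2 ∩ {x | δ' ≤ |x|} with hK
  have hKcl : IsClosed K := isClosed_Icc.inter (isClosed_le continuous_const continuous_abs)
  have hKcomp : IsCompact K := (isCompact_Icc).inter_right (isClosed_le continuous_const continuous_abs)
  have hKne : K.Nonempty := ⟨δ', ⟨by constructor <;> [linarith; linarith], by
    simpa [abs_of_pos hδ'pos] using le_refl δ'⟩⟩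
  have hζ : ∀ x ∈ K, x ≠ 0 := by
    rintro x ⟨-, hx⟩ rfl; simp at hx; linarith
  have hcont : ContinuousOn (fun x => Real.sin x / x) K :=
    (Real.continuous_sin.continuousOn).div continuousOn_id hζ
  obtain ⟨x₀, hx₀K, hmax⟩ := hKcomp.exists_isMaxOn hKne hcont
  have hρ : Real.sin x₀ / x₀ < 1 := aux_sinc_lt_one (hζ _ hx₀K)
  refine ⟨min (1 - Real.sin x₀ / x₀) (1/2), lt_min (by linarith) (by norm_num),
    min_le_right _ _, ?_⟩
  intro m hm
  have hm0 : m ≠ 0 := by intro h; rw [h] at hm; simp at hm; linarith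
  rw [if_neg hm0]
  rcases le_or_gt (|m|) 2 with h2 | h2
  · have hmK : m ∈ K := ⟨abs_le.mp h2, le_trans (min_le_left _ _) hm⟩
    have := hmax hmK
    simp only [Set.mem_setOf_eq] at this
    have h1 : min (1 - Real.sin x₀ / x₀) (1/2) ≤ 1 - Real.sin x₀ / x₀ := min_le_left _ _
    linarith
  · have : Real.sin m / m ≤ |Real.sin m / m| := le_abs_self _
    have habs : |Real.sin m / m| ≤ 1 / |m| := by
      rw [abs_div]
      gcongr
      exact Real.abs_sin_le_one m
    have : Real.sin m / m ≤ 1/2 := by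
      have h12 : 1 / |m| ≤ 1/2 := by
        rw [div_le_div_iff₀ (by positivity) (by norm_num)]; linarith
      calc Real.sin m / m ≤ |Real.sin m / m| := le_abs_self _
        _ ≤ 1 / |m| := habs
        _ ≤ 1/2 := h12
    have := min_le_right (1 - Real.sin x₀ / x₀) (1/2)
    linarith


open MeasureTheory Filter Topology Complex

section
variable {c : ℕ → ℂ} {c₀ : ℂ}

lemma aux_integral_cos_mul (m : ℝ) :
    ∫ τ in (0:ℝ)..1, Real.cos (τ * m) = if m = 0 then 1 else Real.sin m / m := by
  rcases eq_or_ne m 0 with rfl | hm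
  · simp
  · rw [if_neg hm, intervalIntegral.integral_comp_mul_right Real.cos hm]
    simp [integral_cos, smul_eq_mul, div_eq_inv_mul]

lemma tendsto_of_exp_smul_tendsto
    (h : ∀ τ : ℝ, τ ∈ Set.Icc (0:ℝ) 1 →
      Tendsto (fun n => Complex.exp (τ * c n)) atTop (𝓝 (Complex.exp (τ * c₀)))) :
    Tendsto c atTop (𝓝 c₀) := by
  set u : ℕ → ℂ := fun n => c n - c₀ with hu_def
  have hu : ∀ τ : ℝ, τ ∈ Set.Icc (0:ℝ) 1 →
      Tendsto (fun n => Complex.exp (τ * u n)) atTop (𝓝 1) := by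
    intro τ hτ
    have := (h τ hτ).div_const (Complex.exp (τ * c₀))
    rw [div_self (Complex.exp_ne_zero _)] at this
    convert this using 2 with n
    rw [hu_def, mul_sub, Complex.exp_sub]
  -- real parts
  have hre : Tendsto (fun n => (u n).re) atTop (𝓝 0) := by
    have h1 := (continuous_norm.tendsto (1:ℂ)).comp (hu 1 (by norm_num))
    simp only [Function.comp_def, Complex.norm_exp, norm_one] at h1
    have h2 := (Real.continuousAt_log one_ne_zero).tendsto.comp h1
    simp only [Function.comp_def, Real.log_exp, Real.log_one] at h2
    convert h2 using 2 with n
    rw [Complex.re_ofReal_mul]; ring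
  -- cosine convergence
  have hcos : ∀ τ : ℝ, τ ∈ Set.Icc (0:ℝ) 1 →
      Tendsto (fun n => Real.cos (τ * (u n).im)) atTop (𝓝 1) := by
    intro τ hτ
    have h1 := (Complex.continuous_re.tendsto 1).comp (hu τ hτ)
    simp only [Function.comp_def, Complex.one_re] at h1
    have h2 : Tendsto (fun n => Real.exp (τ * (u n).re)) atTop (𝓝 1) := by
      have h0 : Tendsto (fun k => τ * (u k).re) atTop (𝓝 0) := by
        simpa using hre.const_mul τ
      have := (Real.continuous_exp.tendsto 0).comp h0
      simpa [Function.comp_def, Real.exp_zero] using this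
    have h3 := h1.div h2 one_ne_zero
    rw [div_one] at h3
    convert h3 using 2 with n
    simp only [Pi.div_apply, Complex.exp_re, Complex.re_ofReal_mul, Complex.im_ofReal_mul]
    field_simp
  -- integral convergence by dominated convergence
  have hI : Tendsto (fun n => ∫ τ in (0:ℝ)..1, Real.cos (τ * (u n).im)) atTop (𝓝 1) := by
    have := intervalIntegral.tendsto_integral_filter_of_dominated_convergence
      (μ := volume) (l := (atTop : Filter ℕ)) (a := (0:ℝ)) (b := 1) (F := fun n τ => Real.cos (τ * (u n).im))
      (f := fun _ => (1:ℝ)) (bound := fun _ => (1:ℝ))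
      (Filter.Eventually.of_forall fun n =>
        ((Real.continuous_cos.comp (continuous_id.mul continuous_const)).aestronglyMeasurable).restrict)
      (Filter.Eventually.of_forall fun n => Filter.Eventually.of_forall fun τ _ => by
        simpa using Real.abs_cos_le_one (τ * (u n).im))
      (intervalIntegrable_const)
      ?_
    · simpa using this
    · refine Filter.Eventually.of_forall fun τ hτ => ?_
      have hτ' : τ ∈ Set.Icc (0:ℝ) 1 := by
        rw [Set.uIoc_of_le (by norm_num : (0:ℝ) ≤ 1)] at hτ
        exact Set.Ioc_subset_Icc_self hτ
      exact hcos τ hτ'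
  -- imaginary parts
  have him : Tendsto (fun n => (u n).im) atTop (𝓝 0) := by
    rw [NormedAddCommGroup.tendsto_nhds_zero]
    intro δ hδ
    obtain ⟨ε, hεpos, hεhalf, hbound⟩ := aux_sinc_bound δ hδ
    obtain ⟨N, hN⟩ := Metric.tendsto_atTop.mp hI ε hεpos
    filter_upwards [eventually_ge_atTop N] with n hn
    have hdist := hN n hn
    rw [Real.dist_eq] at hdist
    by_contra hcon
    push_neg at hcon
    have h1 : (if (u n).im = 0 then (1:ℝ) else Real.sin (u n).im / (u n).im) ≤ 1 - ε :=
      hbound _ (by simpa using hcon)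
    rw [← aux_integral_cos_mul] at h1
    have := abs_lt.mp hdist
    linarith [this.1]
  -- conclude
  have huz : Tendsto u atTop (𝓝 0) := by
    have h1 : Tendsto (fun n => ((u n).re : ℂ) + ((u n).im : ℂ) * Complex.I) atTop (𝓝 0) := by
      have hr := (Complex.continuous_ofReal.tendsto 0).comp hre
      have hi := ((Complex.continuous_ofReal.tendsto 0).comp him).mul_const Complex.I
      simpa using hr.add hi
    convert h1 using 2 with n
    exact (Complex.re_add_im (u n)).symm
  have h5 : Tendsto (fun n => c₀ + u n) atTop (𝓝 (c₀ + 0)) := tendsto_const_nhds.add huz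
  have h6 : (fun n => c₀ + u n) = c := by funext n; rw [hu_def]; ring
  rw [h6, add_zero] at h5
  exact h5
end

section
open ProbabilityTheory
variable {Ω : Type*} [MeasurableSpace Ω] {P : Measure Ω} [IsProbabilityMeasure P]

lemma aux_integrable_of_bounded {g : Ω → ℝ} (hm : AEStronglyMeasurable g P)
    (hb : ∀ ω, |g ω| ≤ 1) : Integrable g P :=
  (integrable_const (1:ℝ)).mono' hm (Filter.Eventually.of_forall fun ω => by
    simpa using hb ω)

lemma indepFun_integral_mul_complex {U V : Ω → ℂ} (h : IndepFun U V P)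
    (hU : AEStronglyMeasurable U P) (hV : AEStronglyMeasurable V P)
    (bU : ∀ ω, ‖U ω‖ ≤ 1) (bV : ∀ ω, ‖V ω‖ ≤ 1) :
    ∫ ω, U ω * V ω ∂P = (∫ ω, U ω ∂P) * ∫ ω, V ω ∂P := by
  set a : Ω → ℝ := fun ω => (U ω).re with ha
  set b : Ω → ℝ := fun ω => (U ω).im with hb
  set c : Ω → ℝ := fun ω => (V ω).re with hc
  set d : Ω → ℝ := fun ω => (V ω).im with hd
  have ham : AEStronglyMeasurable a P := (Complex.measurable_re.comp_aemeasurable hU.aemeasurable).aestronglyMeasurable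
  have hbm : AEStronglyMeasurable b P := (Complex.measurable_im.comp_aemeasurable hU.aemeasurable).aestronglyMeasurable
  have hcm : AEStronglyMeasurable c P := (Complex.measurable_re.comp_aemeasurable hV.aemeasurable).aestronglyMeasurable
  have hdm : AEStronglyMeasurable d P := (Complex.measurable_im.comp_aemeasurable hV.aemeasurable).aestronglyMeasurable
  have hba : ∀ ω, |a ω| ≤ 1 := fun ω => le_trans (Complex.abs_re_le_norm _) (bU ω)
  have hbb : ∀ ω, |b ω| ≤ 1 := fun ω => le_trans (Complex.abs_im_le_norm _) (bU ω)
  have hbc : ∀ ω, |c ω| ≤ 1 := fun ω => le_trans (Complex.abs_re_le_norm _) (bV ω)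
  have hbd : ∀ ω, |d ω| ≤ 1 := fun ω => le_trans (Complex.abs_im_le_norm _) (bV ω)
  have hai : Integrable a P := aux_integrable_of_bounded ham hba
  have hbi : Integrable b P := aux_integrable_of_bounded hbm hbb
  have hci : Integrable c P := aux_integrable_of_bounded hcm hbc
  have hdi : Integrable d P := aux_integrable_of_bounded hdm hbd
  have hac : IndepFun a c P := h.comp Complex.measurable_re Complex.measurable_re
  have had : IndepFun a d P := h.comp Complex.measurable_re Complex.measurable_im
  have hbc' : IndepFun b c P := h.comp Complex.measurable_im Complex.measurable_re
  have hbd' : IndepFun b d P := h.comp Complex.measurable_im Complex.measurable_im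
  have e1 : ∫ ω, a ω * c ω ∂P = (∫ ω, a ω ∂P) * ∫ ω, c ω ∂P := hac.integral_mul_eq_mul_integral ham hcm
  have e2 : ∫ ω, a ω * d ω ∂P = (∫ ω, a ω ∂P) * ∫ ω, d ω ∂P := had.integral_mul_eq_mul_integral ham hdm
  have e3 : ∫ ω, b ω * c ω ∂P = (∫ ω, b ω ∂P) * ∫ ω, c ω ∂P := hbc'.integral_mul_eq_mul_integral hbm hcm
  have e4 : ∫ ω, b ω * d ω ∂P = (∫ ω, b ω ∂P) * ∫ ω, d ω ∂P := hbd'.integral_mul_eq_mul_integral hbm hdm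
  have prodInt : ∀ {f g : Ω → ℝ}, AEStronglyMeasurable f P → AEStronglyMeasurable g P →
      (∀ ω, |f ω| ≤ 1) → (∀ ω, |g ω| ≤ 1) → Integrable (fun ω => f ω * g ω) P := by
    intro f g hf hg hbf hbg
    refine aux_integrable_of_bounded (hf.mul hg) fun ω => ?_
    rw [abs_mul]
    calc |f ω| * |g ω| ≤ 1 * 1 := by
          apply mul_le_mul (hbf ω) (hbg ω) (abs_nonneg _) zero_le_one
      _ = 1 := by ring
  have hUdec : U = fun ω => (a ω : ℂ) + (b ω : ℂ) * Complex.I := funext fun ω => (Complex.re_add_im (U ω)).symm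
  have hVdec : V = fun ω => (c ω : ℂ) + (d ω : ℂ) * Complex.I := funext fun ω => (Complex.re_add_im (V ω)).symm
  have hprod : (fun ω => U ω * V ω) =
      fun ω => ((a ω * c ω - b ω * d ω : ℝ) : ℂ) + ((a ω * d ω + b ω * c ω : ℝ) : ℂ) * Complex.I := by
    funext ω
    rw [hUdec, hVdec]
    push_cast
    ring_nf
    rw [Complex.I_sq]
    ring
  have intRe : ∀ {f : Ω → ℝ}, Integrable f P → ∫ ω, (f ω : ℂ) ∂P = ((∫ ω, f ω ∂P : ℝ) : ℂ) := by
    intro f _; exact integral_ofReal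
  have hi1 : Integrable (fun ω => a ω * c ω - b ω * d ω) P :=
    (prodInt ham hcm hba hbc).sub (prodInt hbm hdm hbb hbd)
  have hi2 : Integrable (fun ω => a ω * d ω + b ω * c ω) P :=
    (prodInt ham hdm hba hbd).add (prodInt hbm hcm hbb hbc)
  calc ∫ ω, U ω * V ω ∂P
      = ∫ ω, (((a ω * c ω - b ω * d ω : ℝ) : ℂ) + ((a ω * d ω + b ω * c ω : ℝ) : ℂ) * Complex.I) ∂P := by
        rw [hprod]
    _ = (∫ ω, ((a ω * c ω - b ω * d ω : ℝ) : ℂ) ∂P) + (∫ ω, ((a ω * d ω + b ω * c ω : ℝ) : ℂ) ∂P) * Complex.I := by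
        have HA : Integrable (fun ω => ((a ω * c ω - b ω * d ω : ℝ) : ℂ)) P := hi1.ofReal
        have HB : Integrable (fun ω => ((a ω * d ω + b ω * c ω : ℝ) : ℂ) * Complex.I) P :=
          hi2.ofReal.mul_const Complex.I
        rw [integral_add HA HB, integral_mul_const]
    _ = (((∫ ω, (a ω * c ω - b ω * d ω) ∂P : ℝ)) : ℂ) + (((∫ ω, (a ω * d ω + b ω * c ω) ∂P : ℝ)) : ℂ) * Complex.I := by
        rw [intRe hi1, intRe hi2]
    _ = (∫ ω, U ω ∂P) * ∫ ω, V ω ∂P := by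
        rw [integral_sub (prodInt ham hcm hba hbc) (prodInt hbm hdm hbb hbd),
          integral_add (prodInt ham hdm hba hbd) (prodInt hbm hcm hbb hbc)]
        rw [show ∫ ω, U ω ∂P = ∫ ω, ((a ω : ℂ) + (b ω : ℂ) * Complex.I) ∂P by rw [← hUdec],
          show ∫ ω, V ω ∂P = ∫ ω, ((c ω : ℂ) + (d ω : ℂ) * Complex.I) ∂P by rw [← hVdec]]
        have HA : Integrable (fun ω => ((a ω : ℝ) : ℂ)) P := hai.ofReal
        have HB : Integrable (fun ω => ((b ω : ℝ) : ℂ) * Complex.I) P := hbi.ofReal.mul_const Complex.I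
        have HC : Integrable (fun ω => ((c ω : ℝ) : ℂ)) P := hci.ofReal
        have HD : Integrable (fun ω => ((d ω : ℝ) : ℂ) * Complex.I) P := hdi.ofReal.mul_const Complex.I
        rw [integral_add HA HB, integral_add HC HD,
          integral_mul_const, integral_mul_const, intRe hai, intRe hbi, intRe hci, intRe hdi]
        rw [e1, e2, e3, e4]
        push_cast
        ring_nf
        rw [Complex.I_sq]
        ring
end

section
open ProbabilityTheory
variable {Ω : Type*} [MeasurableSpace Ω] {P : Measure Ω} [IsProbabilityMeasure P]

lemma aux_integral_finset_prod {ι : Type*} {W : ι → Ω → ℂ}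
    (hmeas : ∀ i, Measurable (W i)) (hb : ∀ i ω, ‖W i ω‖ ≤ 1)
    (hind : iIndepFun W P) (s : Finset ι) :
    ∫ ω, ∏ i ∈ s, W i ω ∂P = ∏ i ∈ s, ∫ ω, W i ω ∂P := by
  classical
  induction s using Finset.induction_on with
  | empty => simp
  | @insert j s hj ih =>
    have hprodmeas : Measurable (fun ω => ∏ i ∈ s, W i ω) :=
      Finset.measurable_prod s fun i _ => hmeas i
    have hprodbd : ∀ ω, ‖∏ i ∈ s, W i ω‖ ≤ 1 := fun ω => by
      rw [norm_prod]
      exact Finset.prod_le_one (fun i _ => norm_nonneg _) (fun i _ => hb i ω)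
    have hIndep : IndepFun (fun ω => ∏ i ∈ s, W i ω) (W j) P := by
      have := hind.indepFun_finsetProd_of_notMem hmeas hj
      have heq : (∏ i ∈ s, W i) = fun ω => ∏ i ∈ s, W i ω := by
        funext ω; exact Finset.prod_apply ω s W
      rwa [heq] at this
    calc ∫ ω, ∏ i ∈ insert j s, W i ω ∂P
        = ∫ ω, W j ω * ∏ i ∈ s, W i ω ∂P := by
          congr 1; funext ω; exact Finset.prod_insert hj
      _ = (∫ ω, W j ω ∂P) * ∫ ω, ∏ i ∈ s, W i ω ∂P :=
          indepFun_integral_mul_complex hIndep.symm (hmeas j).aestronglyMeasurable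
            hprodmeas.aestronglyMeasurable (hb j) hprodbd
      _ = ∏ i ∈ insert j s, ∫ ω, W i ω ∂P := by
          rw [ih, Finset.prod_insert hj]
end

section
open intervalIntegral

lemma aux_riemann_sum {g : ℝ → ℂ} {t : ℝ} (ht : 0 < t) (hg : ContinuousOn g (Set.Icc 0 t)) :
    Tendsto (fun n : ℕ => ∑ k ∈ Finset.range (n+1), (t/(n+1 : ℝ)) • g ((k : ℝ) * (t/(n+1 : ℝ))))
      atTop (𝓝 (∫ s in (0:ℝ)..t, g s)) := by
  rw [Metric.tendsto_atTop]
  intro ε hε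
  have hε' : 0 < ε / (2 * t) := by positivity
  obtain ⟨δ, hδ, hδuc⟩ := Metric.uniformContinuousOn_iff.mp
    (isCompact_Icc.uniformContinuousOn_of_continuous hg) (ε / (2 * t)) hε'
  obtain ⟨N, hN⟩ := exists_nat_gt (t / δ)
  refine ⟨N, fun n hn => ?_⟩
  set h : ℝ := t / (n + 1 : ℝ) with hh
  have hnpos : (0:ℝ) < (n:ℝ) + 1 := by positivity
  have hhpos : 0 < h := by positivity
  have hhδ : h < δ := by
    rw [hh, div_lt_iff₀ hnpos]
    have h1 : t / δ < (n:ℝ) + 1 := lt_of_lt_of_le hN (by exact_mod_cast Nat.le_succ_of_le hn)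
    calc t = (t / δ) * δ := by field_simp
      _ < ((n:ℝ) + 1) * δ := by apply mul_lt_mul_of_pos_right h1 hδ
      _ = δ * ((n:ℝ) + 1) := by ring
  set p : ℕ → ℝ := fun k => (k : ℝ) * h with hp
  have hpmem : ∀ k : ℕ, k ≤ n + 1 → p k ∈ Set.Icc (0:ℝ) t := by
    intro k hk
    constructor
    · positivity
    · rw [hp]
      calc (k:ℝ) * h ≤ ((n:ℝ)+1) * h := by
            apply mul_le_mul_of_nonneg_right ?_ hhpos.le
            exact_mod_cast hk
        _ = t := by rw [hh]; field_simp
  have hsub : ∀ k : ℕ, k < n + 1 → Set.uIcc (p k) (p (k+1)) ⊆ Set.Icc 0 t := by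
    intro k hk
    rw [Set.uIcc_of_le (by
      rw [hp]; apply mul_le_mul_of_nonneg_right ?_ hhpos.le; exact_mod_cast Nat.le_succ k)]
    intro x hx
    exact ⟨le_trans (hpmem k hk.le).1 hx.1, le_trans hx.2 (hpmem (k+1) hk).2⟩
  have hint : ∀ k : ℕ, k < n + 1 → IntervalIntegrable g MeasureTheory.volume (p k) (p (k+1)) :=
    fun k hk => (hg.mono (hsub k hk)).intervalIntegrable
  have hple : ∀ k : ℕ, p k ≤ p (k+1) := by
    intro k
    rw [hp]
    apply mul_le_mul_of_nonneg_right ?_ hhpos.le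
    exact_mod_cast Nat.le_succ k
  have hsum : ∫ s in (0:ℝ)..t, g s = ∑ k ∈ Finset.range (n+1), ∫ s in p k..p (k+1), g s := by
    have hadj := intervalIntegral.sum_integral_adjacent_intervals hint
    have hp0 : p 0 = 0 := by rw [hp]; simp
    have hpn : p (n+1) = t := by rw [hp]; push_cast; rw [hh]; field_simp
    rw [hadj, hp0, hpn]
  have hterm : ∀ k ∈ Finset.range (n+1),
      ‖h • g (p k) - ∫ s in p k..p (k+1), g s‖ ≤ (ε / (2*t)) * h := by
    intro k hk
    rw [Finset.mem_range] at hk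
    have h1 : h • g (p k) = ∫ _ in p k..p (k+1), g (p k) := by
      rw [intervalIntegral.integral_const]
      congr 1
      rw [hp]; push_cast; ring
    have hdd : p (k+1) - p k = h := by rw [hp]; push_cast; ring
    have hbnd : ∀ x ∈ Set.uIoc (p k) (p (k+1)), ‖g (p k) - g x‖ ≤ ε / (2*t) := by
      intro x hx
      rw [Set.uIoc_of_le (hple k)] at hx
      have hxIcc : x ∈ Set.Icc (0:ℝ) t :=
        ⟨le_trans (hpmem k hk.le).1 hx.1.le, le_trans hx.2 (hpmem (k+1) hk).2⟩
      have hdist : dist (p k) x < δ := by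
        rw [Real.dist_eq, abs_of_neg (by linarith [hx.1]), neg_sub]
        have h3 : x ≤ p (k+1) := hx.2
        linarith [hx.1, hhδ]
      have h4 := hδuc (p k) (hpmem k hk.le) x hxIcc hdist
      rw [dist_eq_norm] at h4
      exact h4.le
    rw [h1, ← intervalIntegral.integral_sub (by
      exact intervalIntegrable_const) (hint k hk)]
    calc ‖∫ s in p k..p (k+1), (g (p k) - g s)‖ ≤ (ε / (2*t)) * |p (k+1) - p k| :=
          intervalIntegral.norm_integral_le_of_norm_le_const hbnd
      _ = (ε / (2*t)) * h := by rw [hdd, abs_of_pos hhpos]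
  calc dist (∑ k ∈ Finset.range (n+1), h • g (p k)) (∫ s in (0:ℝ)..t, g s)
      = ‖∑ k ∈ Finset.range (n+1), (h • g (p k) - ∫ s in p k..p (k+1), g s)‖ := by
        rw [dist_eq_norm, hsum, Finset.sum_sub_distrib]
    _ ≤ ∑ k ∈ Finset.range (n+1), ‖h • g (p k) - ∫ s in p k..p (k+1), g s‖ :=
        norm_sum_le _ _
    _ ≤ ∑ _k ∈ Finset.range (n+1), (ε / (2*t)) * h := Finset.sum_le_sum hterm
    _ = ((n:ℝ)+1) * ((ε / (2*t)) * h) := by rw [Finset.sum_const, Finset.card_range]; push_cast; ring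
    _ = ε / 2 := by rw [hh]; field_simp
    _ < ε := by linarith
end

section
variable {H : Type*} [NormedAddCommGroup H] [InnerProductSpace ℝ H]

lemma aux_strong_cont {a : ℝ → ℝ} {A : H →ₗ.[ℝ] H} {R : ℝ → H →L[ℝ] H}
    (hR : IsResolventFamily a A R) (hAdense : Dense (A.domain : Set H)) (x : H) :
    ContinuousOn (fun s => R s x) (Set.Ici 0) := by
  intro s₀ hs₀
  have hs₀' : (0:ℝ) ≤ s₀ := hs₀
  rw [Metric.continuousWithinAt_iff]
  intro ε hε
  obtain ⟨C₀, hC₀⟩ := hR.loc_bdd (s₀ + 1) (by linarith)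
  set C := max C₀ 1 with hCdef
  have hCpos : (0:ℝ) < C := lt_of_lt_of_le one_pos (le_max_right _ _)
  have hC : ∀ s ∈ Set.Icc (0:ℝ) (s₀+1), ‖R s‖ ≤ C := fun s hs =>
    le_trans (hC₀ s hs) (le_max_left _ _)
  obtain ⟨x', hx'dom, hx'⟩ := hAdense.exists_dist_lt x (show (0:ℝ) < ε/(4*C) by positivity)
  have hcx := hR.strong_cont x' hx'dom s₀ hs₀
  rw [Metric.continuousWithinAt_iff] at hcx
  obtain ⟨δ', hδ', hδ'c⟩ := hcx (ε/4) (by positivity)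
  refine ⟨min δ' 1, lt_min hδ' one_pos, ?_⟩
  intro s hs hsd
  have hsd1 : dist s s₀ < δ' := lt_of_lt_of_le hsd (min_le_left _ _)
  have hsd2 : dist s s₀ < 1 := lt_of_lt_of_le hsd (min_le_right _ _)
  have hsIcc : s ∈ Set.Icc (0:ℝ) (s₀+1) := by
    constructor
    · exact hs
    · rw [Real.dist_eq] at hsd2
      have := abs_lt.mp hsd2
      linarith [this.1]
  have hs₀Icc : s₀ ∈ Set.Icc (0:ℝ) (s₀+1) := ⟨hs₀', by linarith⟩
  have hbd : ∀ u ∈ Set.Icc (0:ℝ) (s₀+1), ‖R u x - R u x'‖ ≤ C * (ε/(4*C)) := by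
    intro u hu
    calc ‖R u x - R u x'‖ = ‖R u (x - x')‖ := by rw [map_sub]
      _ ≤ ‖R u‖ * ‖x - x'‖ := (R u).le_opNorm _
      _ ≤ C * (ε/(4*C)) := by
          apply mul_le_mul (hC u hu) ?_ (norm_nonneg _) hCpos.le
          rw [← dist_eq_norm]
          exact hx'.le
  have hCe : C * (ε/(4*C)) = ε/4 := by field_simp
  have h1 : dist (R s x) (R s x') ≤ ε/4 := by
    rw [dist_eq_norm, ← hCe]; exact hbd s hsIcc
  have h2 : dist (R s x') (R s₀ x') < ε/4 := hδ'c hs hsd1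
  have h3 : dist (R s₀ x') (R s₀ x) ≤ ε/4 := by
    rw [dist_comm, dist_eq_norm, ← hCe]; exact hbd s₀ hs₀Icc
  have h4 := dist_triangle4 (R s x) (R s x') (R s₀ x') (R s₀ x)
  linarith
end

/-- Proposition 3 of the paper. Assume the resolvent family has bounded
variation in operator norm and let `φ` be the characteristic exponent of `Z`, i.e. the
distinguished logarithm: `E[exp(i⟪v, Z(τ)⟫)] = exp(τ φ(v))` for `τ ≥ 0` (so that
`φ(v) = log E[exp(i⟪v, Z(1)⟫)]`). Then the logarithm of the characteristic functional of
`∫_(0,t] R(t-τ) dZ(τ)` equals `∫_(0,t] log E[exp(i⟪R(t-s)* y, Z(1)⟫)] ds`, i.e.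
`E[exp(i⟪y, ∫_(0,t] R(t-τ) dZ(τ)⟫)] = exp(∫₀ᵗ φ(R(t-s)* y) ds)`. -/
theorem stochastic_convolution_log_characteristic_functional
    {Ω : Type*} [MeasurableSpace Ω] (P : Measure Ω) [IsProbabilityMeasure P]
    {H : Type*} [NormedAddCommGroup H] [InnerProductSpace ℝ H] [CompleteSpace H]
    [SecondCountableTopology H] [MeasurableSpace H] [BorelSpace H]
    (Z : ℝ → Ω → H) (hZ : IsLevyProcess P Z)
    (a : ℝ → ℝ) (ha : LocallyIntegrableOn a (Set.Ici 0) volume)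
    (A : H →ₗ.[ℝ] H) (hAdense : Dense (A.domain : Set H)) (hAclosed : A.IsClosed)
    (R : ℝ → H →L[ℝ] H) (hR : IsResolventFamily a A R)
    (hRBV : ∀ b : ℝ, 0 < b → OpBoundedVariationOn R 0 b)
    (φ : H → ℂ)
    (hφ : ∀ (v : H) (τ : ℝ), 0 ≤ τ →
      ∫ ω, Complex.exp (Complex.I * ((inner ℝ v (Z τ ω) : ℝ) : ℂ)) ∂P =
        Complex.exp ((τ : ℂ) * φ v))
    (t : ℝ) (ht : 0 < t)
    (Y : Ω → H) (hY : IsRSStochIntegral P (fun s => R (t - s)) Z 0 t Y) :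
    ∀ y : H,
      ∫ ω, Complex.exp (Complex.I * ((inner ℝ y (Y ω) : ℝ) : ℂ)) ∂P =
        Complex.exp (∫ s in (0:ℝ)..t, φ ((ContinuousLinearMap.adjoint (R (t - s))) y)) := by
  intro y
  have ht' : (0:ℝ) ≤ t := ht.le
  set g : ℝ → ℂ := fun s => φ ((ContinuousLinearMap.adjoint (R (t - s))) y) with hgdef
  -- strong continuity of the resolvent family on all of H
  have hRc : ∀ x : H, ContinuousOn (fun s => R s x) (Set.Ici 0) :=
    fun x => aux_strong_cont hR hAdense x
  -- continuity and boundedness of the test function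
  have hcont_exp : ∀ w : H →L[ℝ] H,
      Continuous fun x : H => Complex.exp (Complex.I * ((inner ℝ y (w x) : ℝ) : ℂ)) := by
    intro w
    exact Complex.continuous_exp.comp (continuous_const.mul
      (Complex.continuous_ofReal.comp (continuous_const.inner w.continuous)))
  have hnorm_exp : ∀ r : ℝ, ‖Complex.exp (Complex.I * (r : ℂ))‖ = 1 := by
    intro r; rw [mul_comm]; exact Complex.norm_exp_ofReal_mul_I r
  -- the characteristic function formula for the transformed process
  have hexpg : ∀ s τ : ℝ, 0 ≤ τ →
      ∫ ω, Complex.exp (Complex.I * ((inner ℝ y (R (t - s) (Z τ ω)) : ℝ) : ℂ)) ∂P =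
        Complex.exp ((τ : ℂ) * g s) := by
    intro s τ hτ
    have h0 := hφ ((ContinuousLinearMap.adjoint (R (t - s))) y) τ hτ
    simp only [ContinuousLinearMap.adjoint_inner_left] at h0
    exact h0
  -- continuity of `g` on `[0, t]`
  have hgc : ContinuousOn g (Set.Icc 0 t) := by
    intro s₀ hs₀
    rw [ContinuousWithinAt, tendsto_iff_seq_tendsto]
    intro u hu
    have humem : ∀ᶠ j in atTop, u j ∈ Set.Icc (0:ℝ) t := hu self_mem_nhdsWithin
    have hulim : Tendsto u atTop (𝓝 s₀) := hu.mono_right nhdsWithin_le_nhds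
    apply tendsto_of_exp_smul_tendsto
    intro τ hτ
    have hτ0 : (0:ℝ) ≤ τ := hτ.1
    -- convergence of the integrals via dominated convergence
    have hptw : ∀ ω : Ω,
        Tendsto (fun j => Complex.exp (Complex.I * ((inner ℝ y (R (t - u j) (Z τ ω)) : ℝ) : ℂ)))
          atTop (𝓝 (Complex.exp (Complex.I * ((inner ℝ y (R (t - s₀) (Z τ ω)) : ℝ) : ℂ)))) := by
      intro ω
      have h1 : Tendsto (fun j => t - u j) atTop (𝓝[Set.Ici 0] (t - s₀)) := by
        rw [tendsto_nhdsWithin_iff]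
        constructor
        · exact tendsto_const_nhds.sub hulim
        · filter_upwards [humem] with j hj
          simp only [Set.mem_Ici, sub_nonneg]
          exact hj.2
      have h2 : Tendsto (fun j => R (t - u j) (Z τ ω)) atTop (𝓝 (R (t - s₀) (Z τ ω))) :=
        (hRc (Z τ ω) (t - s₀) (by simp only [Set.mem_Ici, sub_nonneg]; exact hs₀.2)).tendsto.comp h1
      exact ((Complex.continuous_exp.tendsto _).comp
        ((continuous_const.mul (Complex.continuous_ofReal.comp
          (continuous_const.inner continuous_id))).tendsto _)).comp h2
    have hdct : Tendsto
        (fun j => ∫ ω, Complex.exp (Complex.I * ((inner ℝ y (R (t - u j) (Z τ ω)) : ℝ) : ℂ)) ∂P)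
        atTop (𝓝 (∫ ω, Complex.exp (Complex.I * ((inner ℝ y (R (t - s₀) (Z τ ω)) : ℝ) : ℂ)) ∂P)) := by
      apply tendsto_integral_of_dominated_convergence (fun _ => (1:ℝ))
      · intro j
        exact ((hcont_exp (R (t - u j))).measurable.comp (hZ.measurable τ)).aestronglyMeasurable
      · exact integrable_const 1
      · intro j
        exact Filter.Eventually.of_forall fun ω => le_of_eq (hnorm_exp _)
      · exact Filter.Eventually.of_forall hptw
    have heq1 : (fun j => Complex.exp ((τ:ℂ) * (g ∘ u) j)) =
        fun j => ∫ ω, Complex.exp (Complex.I * ((inner ℝ y (R (t - u j) (Z τ ω)) : ℝ) : ℂ)) ∂P :=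
      funext fun j => (hexpg (u j) τ hτ0).symm
    rw [heq1, ← hexpg s₀ τ hτ0]
    exact hdct
  -- the uniform partition sequence
  have hstep_pos : ∀ n : ℕ, (0:ℝ) < t / (n + 1 : ℝ) := fun n => by positivity
  set π : PartitionSeq 0 t :=
    { m := fun n => n + 1
      pt := fun n k => (k : ℝ) * (t / (n + 1 : ℝ))
      tag := fun n k => (k : ℝ) * (t / (n + 1 : ℝ))
      left := fun n => by simp
      right := fun n => by
        push_cast
        rw [mul_comm]
        exact div_mul_cancel₀ t (by positivity)
      mono := fun n k _ => by
        have h1 := hstep_pos n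
        push_cast
        nlinarith
      tag_mem := fun n k _ => ⟨le_refl _, by
        have h1 := hstep_pos n
        push_cast
        nlinarith⟩
      mesh := by
        intro ε hε
        obtain ⟨N, hN⟩ := exists_nat_gt (t / ε)
        refine ⟨N, fun n hn k _ => ?_⟩
        have h1 : ((k:ℝ) + 1) * (t / (n + 1 : ℝ)) - (k:ℝ) * (t / (n + 1 : ℝ))
            = t / (n + 1 : ℝ) := by ring
        push_cast
        rw [h1, div_lt_iff₀ (by positivity)]
        have h2 : t / ε < (n:ℝ) + 1 := lt_of_lt_of_le hN (by exact_mod_cast Nat.le_succ_of_le hn)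
        calc t = (t/ε) * ε := by field_simp
          _ < ((n:ℝ)+1) * ε := mul_lt_mul_of_pos_right h2 hε
          _ = ε * ((n:ℝ)+1) := by ring } with hπdef
  have hS := hY π
  -- characteristic function of the Riemann–Stieltjes sums
  have hchar : ∀ n : ℕ,
      ∫ ω, Complex.exp (Complex.I * ((inner ℝ y (∑ k ∈ Finset.range (π.m n),
          R (t - π.tag n k) (Z (π.pt n (k+1)) ω - Z (π.pt n k) ω)) : ℝ) : ℂ)) ∂P =
      Complex.exp (∑ k ∈ Finset.range (n+1),
          (((t / (n + 1 : ℝ) : ℝ)) : ℂ) * g ((k : ℝ) * (t / (n + 1 : ℝ)))) := by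
    intro n
    set h : ℝ := t / (n + 1 : ℝ) with hh
    have hhpos : 0 < h := hstep_pos n
    set p : ℕ → ℝ := fun k => (k : ℝ) * h with hp
    have hpnn : ∀ k : ℕ, 0 ≤ p k := fun k => by rw [hp]; positivity
    -- increments are independent
    set tv : Fin (n + 2) → ℝ := fun j => (j : ℝ) * h with htv
    have hind := hZ.indep (n + 1) tv (by rw [htv]; simp)
      (fun i j hij => by
        rw [htv]
        exact mul_le_mul_of_nonneg_right (by exact_mod_cast hij) hhpos.le)
    set B : Fin (n + 1) → Ω → H :=
      fun i ω => Z (p ((i : ℕ) + 1)) ω - Z (p (i : ℕ)) ω with hB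
    have hBind : iIndepFun B P := by
      have hBeq : B = fun i : Fin (n+1) => fun ω => Z (tv i.succ) ω - Z (tv i.castSucc) ω := by
        funext i ω
        rw [hB, htv, hp]
        congr 2
        all_goals push_cast [Fin.val_succ, Fin.coe_castSucc]
        all_goals ring
      rw [hBeq]
      exact hind
    set W : Fin (n + 1) → Ω → ℂ :=
      fun i ω => Complex.exp (Complex.I * ((inner ℝ y (R (t - p (i : ℕ)) (B i ω)) : ℝ) : ℂ)) with hW
    have hWmeas : ∀ i, Measurable (W i) := by
      intro i
      have hBm : Measurable (B i) := (hZ.measurable _).sub (hZ.measurable _)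
      exact (hcont_exp (R (t - p (i : ℕ)))).measurable.comp hBm
    have hWbd : ∀ i ω, ‖W i ω‖ ≤ 1 := fun i ω => le_of_eq (hnorm_exp _)
    have hWind : iIndepFun W P := by
      have := hBind.comp
        (fun i => fun x : H => Complex.exp (Complex.I * ((inner ℝ y (R (t - p (i : ℕ)) x) : ℝ) : ℂ)))
        (fun i => (hcont_exp (R (t - p (i : ℕ)))).measurable)
      exact this
    -- each factor
    have hfactor : ∀ i : Fin (n + 1), ∫ ω, W i ω ∂P = Complex.exp ((h : ℂ) * g (p (i : ℕ))) := by
      intro i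
      set F : H → ℂ :=
        fun x => Complex.exp (Complex.I * ((inner ℝ y (R (t - p (i : ℕ)) x) : ℝ) : ℂ)) with hF
      have hFc : Continuous F := hcont_exp _
      have hmap : Measure.map (B i) P = Measure.map (Z h) P := by
        have hstat := hZ.stationary h (p (i : ℕ)) hhpos.le (hpnn _)
        rw [← hstat]
        congr 1
        funext ω
        rw [hB]
        congr 2
        rw [hp]; push_cast; ring
      calc ∫ ω, W i ω ∂P = ∫ x, F x ∂(Measure.map (B i) P) := by
            rw [integral_map (show Measurable (B i) from (hZ.measurable _).sub (hZ.measurable _)).aemeasurable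
              hFc.aestronglyMeasurable]
        _ = ∫ x, F x ∂(Measure.map (Z h) P) := by rw [hmap]
        _ = ∫ ω, F (Z h ω) ∂P := integral_map (hZ.measurable h).aemeasurable hFc.aestronglyMeasurable
        _ = Complex.exp ((h : ℂ) * g (p (i : ℕ))) := hexpg (p (i : ℕ)) h hhpos.le
    -- put it together
    have hsum_eq : ∀ ω, ((inner ℝ y (∑ k ∈ Finset.range (π.m n),
        R (t - π.tag n k) (Z (π.pt n (k+1)) ω - Z (π.pt n k) ω)) : ℝ) : ℂ) =
        ∑ i : Fin (n+1), ((inner ℝ y (R (t - p (i : ℕ)) (B i ω)) : ℝ) : ℂ) := by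
      intro ω
      have h1 : (inner ℝ y (∑ k ∈ Finset.range (π.m n),
          R (t - π.tag n k) (Z (π.pt n (k+1)) ω - Z (π.pt n k) ω)) : ℝ) =
          ∑ k ∈ Finset.range (n+1), (inner ℝ y (R (t - p k) (Z (p (k+1)) ω - Z (p k) ω)) : ℝ) := by
        rw [inner_sum]
      rw [h1]
      push_cast
      rw [← Fin.sum_univ_eq_sum_range (fun k => ((inner ℝ y (R (t - p k) (Z (p (k+1)) ω - Z (p k) ω)) : ℝ) : ℂ)) (n+1)]
    calc ∫ ω, Complex.exp (Complex.I * ((inner ℝ y (∑ k ∈ Finset.range (π.m n),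
            R (t - π.tag n k) (Z (π.pt n (k+1)) ω - Z (π.pt n k) ω)) : ℝ) : ℂ)) ∂P
        = ∫ ω, ∏ i : Fin (n+1), W i ω ∂P := by
          congr 1
          funext ω
          rw [hsum_eq ω, Finset.mul_sum, Complex.exp_sum]
      _ = ∏ i : Fin (n+1), ∫ ω, W i ω ∂P :=
          aux_integral_finset_prod hWmeas hWbd hWind Finset.univ
      _ = ∏ i : Fin (n+1), Complex.exp ((h : ℂ) * g (p (i : ℕ))) := by
          exact Finset.prod_congr rfl fun i _ => hfactor i
      _ = Complex.exp (∑ i : Fin (n+1), (h : ℂ) * g (p (i : ℕ))) := (Complex.exp_sum _ _).symm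
      _ = Complex.exp (∑ k ∈ Finset.range (n+1), (((t / (n + 1 : ℝ) : ℝ)) : ℂ) * g ((k : ℝ) * (t / (n + 1 : ℝ)))) := by
          congr 1
          rw [← Fin.sum_univ_eq_sum_range (fun k => ((t / (n+1:ℝ) : ℝ) : ℂ) * g ((k:ℝ) * (t / (n+1:ℝ)))) (n+1)]
  -- convergence of the characteristic functions of the sums
  have hmeasS : ∀ n : ℕ, Measurable (fun ω => ∑ k ∈ Finset.range (π.m n),
      R (t - π.tag n k) (Z (π.pt n (k+1)) ω - Z (π.pt n k) ω)) := by
    intro n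
    apply Finset.measurable_sum
    intro k _
    exact (R (t - π.tag n k)).continuous.measurable.comp
      ((hZ.measurable _).sub (hZ.measurable _))
  have hL : Tendsto (fun n => ∫ ω, Complex.exp (Complex.I * ((inner ℝ y (∑ k ∈ Finset.range (π.m n),
        R (t - π.tag n k) (Z (π.pt n (k+1)) ω - Z (π.pt n k) ω)) : ℝ) : ℂ)) ∂P) atTop
      (𝓝 (∫ ω, Complex.exp (Complex.I * ((inner ℝ y (Y ω) : ℝ) : ℂ)) ∂P)) := by
    apply tendsto_of_subseq_tendsto
    intro ns hns
    have hsub : TendstoInMeasure P (fun j ω => ∑ k ∈ Finset.range (π.m (ns j)),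
        R (t - π.tag (ns j) k) (Z (π.pt (ns j) (k+1)) ω - Z (π.pt (ns j) k) ω)) atTop Y :=
      fun ε hε => (hS ε hε).comp hns
    obtain ⟨ms, _, hae⟩ := hsub.exists_seq_tendsto_ae
    refine ⟨ms, ?_⟩
    apply tendsto_integral_of_dominated_convergence (fun _ => (1:ℝ))
    · intro j
      exact ((hcont_exp (ContinuousLinearMap.id ℝ H)).measurable.comp
        (hmeasS (ns (ms j)))).aestronglyMeasurable
    · exact integrable_const 1
    · intro j
      exact Filter.Eventually.of_forall fun ω => le_of_eq (hnorm_exp _)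
    · filter_upwards [hae] with ω hω
      exact ((Complex.continuous_exp.tendsto _).comp
        ((continuous_const.mul (Complex.continuous_ofReal.comp
          (continuous_const.inner continuous_id))).tendsto _)).comp hω
  -- convergence of the Riemann sums
  have hRS : Tendsto (fun n : ℕ => Complex.exp (∑ k ∈ Finset.range (n+1),
      (((t / (n + 1 : ℝ) : ℝ)) : ℂ) * g ((k : ℝ) * (t / (n + 1 : ℝ))))) atTop
      (𝓝 (Complex.exp (∫ s in (0:ℝ)..t, g s))) := by
    have hriem := aux_riemann_sum ht hgc
    apply Tendsto.congr ?_ ((Complex.continuous_exp.tendsto _).comp hriem)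
    intro n
    simp only [Function.comp]
    norm_num [Complex.real_smul]
  -- conclude
  have hL' : Tendsto (fun n : ℕ => Complex.exp (∑ k ∈ Finset.range (n+1),
      (((t / (n + 1 : ℝ) : ℝ)) : ℂ) * g ((k : ℝ) * (t / (n + 1 : ℝ))))) atTop
      (𝓝 (∫ ω, Complex.exp (Complex.I * ((inner ℝ y (Y ω) : ℝ) : ℂ)) ∂P)) := by
    have := hL
    rw [show (fun n => ∫ ω, Complex.exp (Complex.I * ((inner ℝ y (∑ k ∈ Finset.range (π.m n),
        R (t - π.tag n k) (Z (π.pt n (k+1)) ω - Z (π.pt n k) ω)) : ℝ) : ℂ)) ∂P) =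
        fun n : ℕ => Complex.exp (∑ k ∈ Finset.range (n+1),
          (((t / (n + 1 : ℝ) : ℝ)) : ℂ) * g ((k : ℝ) * (t / (n + 1 : ℝ)))) from funext hchar] at this
    exact this
  exact tendsto_nhds_unique hL' hRS


end
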